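/- Suppose qr > 1 and fix q̃ ∈ (0,q) with q̃r > 1, δ ∈ (0, min(q̃r − 1, 1)), and an integer g ≥ 1 with (q̃r − 1 − δ)(q̃r)^{g−1} > 1 + δ. There exist constants ε, d, D > 0 such that for every n > r and every m ≥ 1 with m ≤ εn, P_n( there exists A ⊆ V_n with |A| = m such that ψ(A) is not robust ) ≤ D e^{−dm}. -/

import Mathlib

/-!
If `ψ(A)` has at most `(1 + δ)m` ones, every admissible family is good: the generations grow by
the factor `q̃r ≥ 1`, and the ones met in the disjoint layers `J(B_0), …, J(B_j)` cost at most
`(q̃r)^j (1 + δ)m` in generation `j`. So a non-robust `ψ(A)` has `k = ⌊(1 + δ)m⌋ + 1` ones.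

A vertex `σ` with `ψ(σ) = 1` reads an arc of the graph that points back to an earlier explored
vertex, and before `σ` no arc is read twice. Resampling that arc, one vertex at a time in
`≺`-order, shows that `k` prescribed vertices all have `ψ = 1` for at most a fraction
`(|T_m| / (n - r))^k` of the graphs. A union bound over `A` and the `k`-sets of vertices, with
`|T_m| ≤ (g + 1) r^g m`, leaves `C(n, m) 2^{|T_m|} (|T_m| / (n - r))^k ≤ e^{-m}` once `m ≤ εn`.
-/

open MeasureTheory
open scoped ENNReal
/-- A directed-graph structure on `V_n = Fin n`: each vertex `x` has an ordered `r`-tuple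
of distinct input vertices `y_1(x), …, y_r(x)`, all different from `x`. -/
def IsGraph {n r : ℕ} (y : Fin n → Fin r → Fin n) : Prop :=
  ∀ x, Function.Injective (y x) ∧ ∀ i, y x i ≠ x

/-- The uniform probability measure on the space of graph structures (the tuples are chosen
uniformly and independently for each vertex, which is the same as choosing the whole
structure uniformly). -/
noncomputable def graphMeasure (n r : ℕ) : Measure {y : Fin n → Fin r → Fin n // IsGraph y} :=
  (Nat.card {y : Fin n → Fin r → Fin n // IsGraph y} : ℝ≥0∞)⁻¹ • Measure.count

/-- `μ` is the joint law of i.i.d. Bernoulli(q) random variables indexed by `Fin n × ℕ`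
(this property characterizes the product measure uniquely). -/
def IsBernoulliProduct (q : ℝ) {n : ℕ} (μ : Measure (Fin n → ℕ → Bool)) : Prop :=
  ∀ (S : Finset (Fin n × ℕ)) (v : Fin n × ℕ → Bool),
    μ {ω | ∀ p ∈ S, ω p.1 p.2 = v p} =
      ∏ p ∈ S, (if v p then ENNReal.ofReal q else ENNReal.ofReal (1 - q))

/-- The threshold contact process on the graph `y`, driven by `B`, started from `ξ0`:
`ξ_{t+1}(x) = 1` iff `B x (t+1) = 1` and `ξ_t(y_i(x)) = 1` for some `i`. -/
def xi {n r : ℕ} (y : Fin n → Fin r → Fin n) (B : Fin n → ℕ → Bool)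
    (ξ0 : Fin n → Bool) : ℕ → Fin n → Bool
  | 0 => ξ0
  | t + 1 => fun x => B x (t + 1) && decide (∃ i : Fin r, xi y B ξ0 t (y x i) = true)

/-- The dual threshold contact process: `ξ̂_{t+1}(x) = 1` iff there are `z` and `i` with
`y_i(z) = x`, `ξ̂_t(z) = 1` and `B z t = 1`. -/
def xihat {n r : ℕ} (y : Fin n → Fin r → Fin n) (B : Fin n → ℕ → Bool)
    (ξ0 : Fin n → Bool) : ℕ → Fin n → Bool
  | 0 => ξ0
  | t + 1 => fun x =>
      decide (∃ z, ∃ i : Fin r, y z i = x ∧ xihat y B ξ0 t z = true ∧ B z t = true)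

/-- The number of occupied sites of a configuration. -/
def numOnes {n : ℕ} (ξ : Fin n → Bool) : ℕ := (Finset.univ.filter fun x => ξ x = true).card

/-- The joint law `P_n` of the random graph and the Bernoulli variables. -/
noncomputable def Pn (n r : ℕ) (μB : Measure (Fin n → ℕ → Bool)) :
    Measure ({y : Fin n → Fin r → Fin n // IsGraph y} × (Fin n → ℕ → Bool)) :=
  (graphMeasure n r).prod μB

/-- A vertex of the forest `T_m`: a root index in `Fin m` together with a path of length
`i ≤ g` with steps in `Fin r`. -/
abbrev Tvert (m g r : ℕ) := Fin m × Σ i : Fin (g + 1), (Fin (i : ℕ) → Fin r)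

namespace Tvert

/-- The generation (path length) of a vertex of `T_m`. -/
def len {m g r : ℕ} (σ : Tvert m g r) : ℕ := σ.2.1

/-- Truncation of `σ` to path length `l` (for `l ≤ len σ`): the prefix `(σ_0, …, σ_l)`. -/
def trunc {m g r : ℕ} (σ : Tvert m g r) (l : ℕ) : Tvert m g r :=
  ⟨σ.1, ⟨⟨min l (len σ), lt_of_le_of_lt (min_le_right _ _) σ.2.1.2⟩,
    fun k => σ.2.2 ⟨k, lt_of_lt_of_le k.2 (min_le_right _ _)⟩⟩⟩

/-- The tuple `(σ_0, σ_1, …, σ_i)` of a vertex, as a list of naturals. -/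
def key {m g r : ℕ} (σ : Tvert m g r) : List ℕ :=
  (σ.1 : ℕ) :: (List.ofFn σ.2.2).map Fin.val

/-- The order `≺` on `T_m`: shorter vertices first; among vertices of the same length,
lexicographic order on the tuple `(σ_0, …, σ_i)`. -/
def prec {m g r : ℕ} (σ σ' : Tvert m g r) : Prop :=
  len σ < len σ' ∨ (len σ = len σ' ∧ List.Lex (· < ·) (key σ) (key σ'))

/-- `σ → σ'` iff `σ' = (σ, j)` for some `j`, i.e. `σ'` extends `σ` by one step. -/
def edge {m g r : ℕ} (σ σ' : Tvert m g r) : Prop :=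
  len σ' = len σ + 1 ∧ trunc σ' (len σ) = σ

open scoped Classical in
/-- `J(B)`: the set of vertices reachable by one directed edge from `B`. -/
noncomputable def J {m g r : ℕ} (B : Finset (Tvert m g r)) : Finset (Tvert m g r) :=
  Finset.univ.filter fun σ' => ∃ σ ∈ B, edge σ σ'

end Tvert

/-- `z^σ = y_{σ_i}(y_{σ_{i-1}}(⋯ y_{σ_1}(x_{σ_0})⋯))`, where `x_1 < … < x_m` enumerates `A`. -/
noncomputable def zvert {n r m g : ℕ} (y : Fin n → Fin r → Fin n)
    (A : Finset (Fin n)) (hA : A.card = m) (σ : Tvert m g r) : Fin n :=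
  (List.ofFn σ.2.2).foldl (fun v j => y v j) (A.orderIsoOfFin hA σ.1 : Fin n)

open scoped Classical in
/-- `A^σ = {z^{σ'} : σ' ≺ σ}`. -/
noncomputable def Aseen {n r m g : ℕ} (y : Fin n → Fin r → Fin n)
    (A : Finset (Fin n)) (hA : A.card = m) (σ : Tvert m g r) : Finset (Fin n) :=
  (Finset.univ.filter fun σ' => Tvert.prec σ' σ).image (zvert y A hA)

open scoped Classical in
/-- The configuration `ψ(A) ∈ {0,1}^{T_m}`: roots get `0`; a non-root vertex `σ` gets `0`
if a strict prefix of `σ` already has value `1` or if `z^σ ∉ A^σ`, and gets `1` otherwise. -/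
noncomputable def psi {n r m g : ℕ} (y : Fin n → Fin r → Fin n)
    (A : Finset (Fin n)) (hA : A.card = m) : Tvert m g r → Bool := fun σ =>
  if h0 : Tvert.len σ = 0 then false
  else
    decide (zvert y A hA σ ∈ Aseen y A hA σ) &&
      !(List.range (Tvert.len σ)).any fun l =>
        if hl : l < Tvert.len σ then psi y A hA (Tvert.trunc σ l) else false
termination_by σ => Tvert.len σ
decreasing_by
  simp only [Tvert.trunc, Tvert.len]
  exact lt_of_le_of_lt (min_le_left _ _) hl

namespace Tvert

/-- `(B_0, …, B_i)` is a family: `B_0 ⊆ T⁰_m` and `B_{j+1} ⊆ J(B_j)` for `j < i`. -/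
def IsFamily {m g r : ℕ} (i : ℕ) (Bs : ℕ → Finset (Tvert m g r)) : Prop :=
  i < g ∧ (∀ σ ∈ Bs 0, len σ = 0) ∧ ∀ j < i, Bs (j + 1) ⊆ J (Bs j)

open scoped Classical in
/-- The part of `J(B)` on which `ψ` vanishes. -/
noncomputable def Jzero {m g r : ℕ} (ψ : Tvert m g r → Bool) (B : Finset (Tvert m g r)) :
    Finset (Tvert m g r) :=
  (J B).filter fun σ => ψ σ = false

/-- A family `(B_0, …, B_i)` is `ψ`-admissible. -/
def IsAdmissible {m g r : ℕ} (qt : ℝ) (ψ : Tvert m g r → Bool)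
    (i : ℕ) (Bs : ℕ → Finset (Tvert m g r)) : Prop :=
  IsFamily (g := g) i Bs ∧
    (∀ j ≤ i, ∀ σ ∈ Bs j, ψ σ = false) ∧
    (qt * m ≤ (Bs 0).card) ∧
    ∀ j < i, qt * (Jzero ψ (Bs j)).card ≤ (Bs (j + 1)).card

/-- A family `(B_0, …, B_i)` is `ψ`-good: it is `ψ`-admissible and in addition
`|J(B_j) ∩ {ψ = 0}| ≥ (q̃r − 1 − δ)(q̃r)^j m` for all `j ≤ i`. -/
def IsGood {m g r : ℕ} (qt δ : ℝ) (ψ : Tvert m g r → Bool)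
    (i : ℕ) (Bs : ℕ → Finset (Tvert m g r)) : Prop :=
  IsAdmissible qt ψ i Bs ∧
    ∀ j ≤ i, (qt * r - 1 - δ) * (qt * r) ^ j * m ≤ (Jzero ψ (Bs j)).card

/-- `ψ` is robust: every `ψ`-admissible family is `ψ`-good. -/
def Robust {m g r : ℕ} (qt δ : ℝ) (ψ : Tvert m g r → Bool) : Prop :=
  ∀ (i : ℕ) (Bs : ℕ → Finset (Tvert m g r)), IsAdmissible qt ψ i Bs → IsGood qt δ ψ i Bs

end Tvert

open Finset

theorem List.lex_take_or_eq {α : Type*} {R : α → α → Prop} {a b : List α} (h : List.Lex R a b)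
    (j : ℕ) : a.take j = b.take j ∨ List.Lex R (a.take j) (b.take j) := by
  induction h generalizing j with
  | nil => cases j <;> simp
  | cons _ ih =>
    cases j with
    | zero => exact Or.inl rfl
    | succ j => rcases ih j with h | h <;> simp [List.Lex.cons, h]
  | rel hab => cases j <;> simp [List.Lex.rel hab]

namespace Tvert

variable {m g r : ℕ}

theorem key_injective : Function.Injective (key (m := m) (g := g) (r := r)) := by
  rintro ⟨a, ⟨i, f⟩⟩ ⟨b, ⟨j, f'⟩⟩ h
  simp only [key, List.cons.injEq] at h
  obtain ⟨hab, hff'⟩ := h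
  obtain rfl : a = b := Fin.ext hab
  obtain rfl : i = j := Fin.ext (by simpa using congrArg List.length hff')
  obtain rfl : f = f' := List.ofFn_injective (List.map_injective_iff.mpr Fin.val_injective hff')
  rfl

theorem prec_irrefl (σ : Tvert m g r) : ¬ prec σ σ := by
  rintro (h | ⟨-, h⟩)
  · exact h.false
  · exact irrefl_of (List.Lex (· < ·)) _ h

theorem prec_trans {a b c : Tvert m g r} (h₁ : prec a b) (h₂ : prec b c) : prec a c := by
  rcases h₁ with h₁ | ⟨e₁, l₁⟩ <;> rcases h₂ with h₂ | ⟨e₂, l₂⟩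
  · exact Or.inl (h₁.trans h₂)
  · exact Or.inl (e₂ ▸ h₁)
  · exact Or.inl (e₁ ▸ h₂)
  · exact Or.inr ⟨e₁.trans e₂, List.lex_trans Nat.lt_trans l₁ l₂⟩

theorem prec_trichotomous (σ σ' : Tvert m g r) : prec σ σ' ∨ σ = σ' ∨ prec σ' σ := by
  rcases Nat.lt_trichotomy (len σ) (len σ') with h | h | h
  · exact Or.inl (Or.inl h)
  · rcases trichotomous_of (List.Lex (· < ·)) (key σ) (key σ') with hl | hl | hl
    · exact Or.inl (Or.inr ⟨h, hl⟩)
    · exact Or.inr (Or.inl (key_injective hl))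
    · exact Or.inr (Or.inr (Or.inr ⟨h.symm, hl⟩))
  · exact Or.inr (Or.inr (Or.inl h))

theorem len_le_of_prec {σ σ' : Tvert m g r} (h : prec σ σ') : len σ ≤ len σ' := by
  rcases h with h | ⟨h, -⟩ <;> omega

theorem exists_greatest_prec (S : Finset (Tvert m g r)) (hS : S.Nonempty) :
    ∃ σ ∈ S, ∀ a ∈ S, a ≠ σ → prec a σ := by
  have : IsTrans (Tvert m g r) (flip prec) := ⟨fun _ _ _ h₁ h₂ => prec_trans h₂ h₁⟩
  have : Std.Irrefl (flip (prec (m := m) (g := g) (r := r))) := ⟨prec_irrefl⟩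
  obtain ⟨σ, hσ, hmin⟩ :=
    (Finite.wellFounded_of_trans_of_irrefl (flip prec)).has_min (S : Set (Tvert m g r)) hS
  refine ⟨σ, hσ, fun a ha hne => ?_⟩
  rcases prec_trichotomous a σ with h | h | h
  · exact h
  · exact absurd h hne
  · exact absurd h (hmin a ha)

theorem len_trunc_of_le {σ : Tvert m g r} {l : ℕ} (h : l ≤ len σ) : len (trunc σ l) = l :=
  min_eq_left h

theorem ofFn_trunc (σ : Tvert m g r) (l : ℕ) :
    List.ofFn (trunc σ l).2.2 = (List.ofFn σ.2.2).take l := by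
  apply List.ext_getElem
  · simp [trunc, len]
  · intro i _ _
    simp [trunc, List.getElem_ofFn]

theorem key_trunc (σ : Tvert m g r) (l : ℕ) : key (trunc σ l) = (key σ).take (l + 1) := by
  simp only [key, List.take_succ_cons, ofFn_trunc, List.map_take]
  rfl

theorem trunc_trunc (σ : Tvert m g r) {l l' : ℕ} (h : l' ≤ l) :
    trunc (trunc σ l) l' = trunc σ l' := by
  refine Prod.ext rfl (Sigma.ext (Fin.ext ?_) ?_)
  · simp [trunc, len]; omega
  · rw [Fin.heq_fun_iff (by simp [trunc, len]; omega)]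
    intro k
    rfl

theorem trunc_prec {σ : Tvert m g r} {l : ℕ} (h : l < len σ) : prec (trunc σ l) σ :=
  Or.inl (by rwa [len_trunc_of_le h.le])

def parent (σ : Tvert m g r) : Tvert m g r := trunc σ (len σ - 1)

theorem len_parent (σ : Tvert m g r) : len (parent σ) = len σ - 1 :=
  len_trunc_of_le (Nat.sub_le _ _)

theorem parent_prec {σ : Tvert m g r} (h : 0 < len σ) : prec (parent σ) σ :=
  trunc_prec (Nat.sub_lt h one_pos)

theorem key_parent {σ : Tvert m g r} (h : 0 < len σ) : key (parent σ) = (key σ).take (len σ) := by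
  rw [parent, key_trunc, Nat.sub_add_cancel h]

/-- Junk value `0` on roots, which have no last step. -/
def lastStep (hr : 0 < r) (σ : Tvert m g r) : Fin r :=
  if h : 0 < len σ then σ.2.2 ⟨len σ - 1, Nat.sub_lt h one_pos⟩ else ⟨0, hr⟩

theorem ofFn_eq_take_append_lastStep (hr : 0 < r) {σ : Tvert m g r} (h : 0 < len σ) :
    List.ofFn σ.2.2 = (List.ofFn σ.2.2).take (len σ - 1) ++ [lastStep hr σ] := by
  have hlen : (List.ofFn σ.2.2).length = len σ := List.length_ofFn
  conv_lhs => rw [← List.take_append_drop (len σ - 1) (List.ofFn σ.2.2)]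
  rw [List.drop_eq_getElem_cons (by omega), List.drop_eq_nil_of_le (by omega)]
  simp [lastStep, h]

theorem key_eq_key_parent_append (hr : 0 < r) {σ : Tvert m g r} (h : 0 < len σ) :
    key σ = key (parent σ) ++ [(lastStep hr σ : ℕ)] := by
  conv_lhs => rw [key, ofFn_eq_take_append_lastStep hr h]
  simp only [key, parent, ofFn_trunc, List.map_append, List.map_take, List.cons_append]
  rfl

theorem eq_of_parent_eq (hr : 0 < r) {ρ σ : Tvert m g r} (hρ : 0 < len ρ) (hσ : 0 < len σ)
    (hp : parent ρ = parent σ) (hl : lastStep hr ρ = lastStep hr σ) : ρ = σ :=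
  key_injective (by rw [key_eq_key_parent_append hr hρ, key_eq_key_parent_append hr hσ, hp, hl])

theorem parent_prec_or_eq {ρ σ : Tvert m g r} (h : prec ρ σ) (hρ : 0 < len ρ) (hσ : 0 < len σ) :
    prec (parent ρ) (parent σ) ∨ parent ρ = parent σ := by
  rcases h with h | ⟨e, lex⟩
  · exact Or.inl (Or.inl (by rw [len_parent ρ, len_parent σ]; omega))
  · rcases List.lex_take_or_eq lex (len ρ) with h' | h'
    · exact Or.inr (key_injective (by rw [key_parent hρ, key_parent hσ, ← e, h']))
    · refine Or.inl (Or.inr ⟨by rw [len_parent ρ, len_parent σ, e], ?_⟩)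
      rwa [key_parent hρ, key_parent hσ, ← e]

theorem eq_of_len_eq_zero {σ σ' : Tvert m g r} (h : len σ = 0) (h' : len σ' = 0)
    (h1 : σ.1 = σ'.1) : σ = σ' := by
  apply key_injective
  have : ∀ τ : Tvert m g r, len τ = 0 → key τ = [(τ.1 : ℕ)] := fun τ hτ => by
    simp [key, List.eq_nil_of_length_eq_zero (l := List.ofFn τ.2.2) (by simpa [len] using hτ)]
  rw [this σ h, this σ' h', h1]

def child (σ : Tvert m g r) (h : len σ < g) (a : Fin r) : Tvert m g r :=
  ⟨σ.1, ⟨⟨len σ + 1, Nat.succ_lt_succ h⟩, Fin.snoc σ.2.2 a⟩⟩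

theorem key_child (σ : Tvert m g r) (h : len σ < g) (a : Fin r) :
    key (child σ h a) = key σ ++ [(a : ℕ)] := by
  have : List.ofFn (child σ h a).2.2 = List.ofFn σ.2.2 ++ [a] := by
    simp only [child, len]
    rw [List.ofFn_succ']
    simp
  simp [key, this]
  rfl

theorem edge_child (σ : Tvert m g r) (h : len σ < g) (a : Fin r) : edge σ (child σ h a) := by
  refine ⟨rfl, key_injective ?_⟩
  rw [key_trunc, key_child, List.take_append_of_le_length (by simp [key, len])]
  simp [key, len]

theorem mem_J {B : Finset (Tvert m g r)} {σ' : Tvert m g r} :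
    σ' ∈ J B ↔ ∃ σ ∈ B, edge σ σ' := by
  simp [J]

theorem card_le_card_J {B : Finset (Tvert m g r)} (hB : ∀ σ ∈ B, len σ < g) :
    r * #B ≤ #(J B) := by
  classical
  calc r * #B = #(B.attach ×ˢ (univ : Finset (Fin r))) := by simp [mul_comm]
    _ ≤ #(J B) := by
      refine card_le_card_of_injOn (fun p => child p.1 (hB _ p.1.2) p.2) ?_ ?_
      · intro p _
        exact mem_J.mpr ⟨p.1, p.1.2, edge_child _ _ _⟩
      · intro p _ q _ hpq
        have hkey := congrArg key hpq
        simp only [key_child] at hkey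
        obtain ⟨h₁, h₂⟩ := List.append_inj' hkey rfl
        exact Prod.ext (Subtype.ext (key_injective h₁))
          (Fin.ext (by simpa using h₂))

theorem IsFamily.len_eq {i : ℕ} {Bs : ℕ → Finset (Tvert m g r)} (hB : IsFamily i Bs) :
    ∀ j ≤ i, ∀ σ ∈ Bs j, len σ = j := by
  intro j
  induction j with
  | zero => exact fun _ => hB.2.1
  | succ j ih =>
    intro hj σ hσ
    obtain ⟨σ₀, hσ₀, hlen, -⟩ := mem_J.mp (hB.2.2 j (by omega) hσ)
    rw [hlen, ih (by omega) σ₀ hσ₀]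

theorem card_J_eq (ψ : Tvert m g r → Bool) (B : Finset (Tvert m g r)) :
    #(J B) = #(Jzero ψ B) + #{σ ∈ J B | ψ σ = true} := by
  classical
  rw [Jzero, add_comm, ← card_filter_add_card_filter_not (s := J B) (fun σ => ψ σ = true)]
  simp only [Bool.not_eq_true]

/-- The layers `J(B_t)` of a family lie in different generations, hence are disjoint. -/
theorem IsFamily.sum_card_ones_le {i : ℕ} {Bs : ℕ → Finset (Tvert m g r)} (hB : IsFamily i Bs)
    (ψ : Tvert m g r → Bool) {j : ℕ} (hj : j ≤ i) :
    ∑ t ∈ range (j + 1), #{σ ∈ J (Bs t) | ψ σ = true} ≤ #{σ | ψ σ = true} := by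
  classical
  rw [← card_biUnion]
  · exact card_le_card fun σ hσ => by
      obtain ⟨_, -, hσ⟩ := mem_biUnion.mp hσ
      simpa using (mem_filter.mp hσ).2
  · intro t₁ ht₁ t₂ ht₂ hne
    simp only [coe_range, Set.mem_Iio] at ht₁ ht₂
    refine disjoint_left.mpr fun σ hσ₁ hσ₂ => hne ?_
    obtain ⟨σ₁, hσ₁, hl₁, -⟩ := mem_J.mp (mem_filter.mp hσ₁).1
    obtain ⟨σ₂, hσ₂, hl₂, -⟩ := mem_J.mp (mem_filter.mp hσ₂).1
    rw [hB.len_eq t₁ (by omega) σ₁ hσ₁] at hl₁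
    rw [hB.len_eq t₂ (by omega) σ₂ hσ₂] at hl₂
    omega

/-- Each generation of an admissible family loses at most the `ψ = 1` vertices of its layer,
amplified by the growth factor `q̃r ≥ 1` of the later generations. -/
theorem IsAdmissible.pow_mul_le_card_Jzero {qt : ℝ} (hqtr : 1 ≤ qt * r)
    {ψ : Tvert m g r → Bool} {i : ℕ} {Bs : ℕ → Finset (Tvert m g r)}
    (hB : IsAdmissible qt ψ i Bs) :
    ∀ j ≤ i, (qt * r) ^ (j + 1) * m ≤ #(Jzero ψ (Bs j)) +
      (qt * r) ^ j * ∑ t ∈ range (j + 1), (#{σ ∈ J (Bs t) | ψ σ = true} : ℝ) := by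
  obtain ⟨hfam, -, hB₀, hstep⟩ := hB
  have hJ : ∀ j ≤ i, (r : ℝ) * #(Bs j) ≤ #(Jzero ψ (Bs j)) + #{σ ∈ J (Bs j) | ψ σ = true} := by
    intro j hj
    exact_mod_cast (card_J_eq ψ (Bs j)) ▸
      card_le_card_J fun σ hσ => (hfam.len_eq j hj σ hσ).trans_lt (hj.trans_lt hfam.1)
  intro j
  induction j with
  | zero =>
    intro hj
    have := hJ 0 hj
    simp only [zero_add, pow_one, pow_zero, one_mul, sum_range_one]
    linarith [mul_le_mul_of_nonneg_left hB₀ (Nat.cast_nonneg r)]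
  | succ j ih =>
    intro hj
    have hprev := mul_le_mul_of_nonneg_left (ih (by omega)) (by linarith : (0 : ℝ) ≤ qt * r)
    have hgrow := mul_le_mul_of_nonneg_left (hstep j (by omega)) (Nat.cast_nonneg r)
    have hloss : (#{σ ∈ J (Bs (j + 1)) | ψ σ = true} : ℝ) ≤
        (qt * r) ^ (j + 1) * #{σ ∈ J (Bs (j + 1)) | ψ σ = true} :=
      le_mul_of_one_le_left (Nat.cast_nonneg _) (one_le_pow₀ hqtr)
    have := hJ (j + 1) hj
    rw [sum_range_succ]
    simp only [pow_succ] at hprev hloss ⊢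
    linarith

theorem robust_of_card_le {qt δ : ℝ} (hqtr : 1 ≤ qt * r)
    {ψ : Tvert m g r → Bool} (hψ : (#{σ | ψ σ = true} : ℝ) ≤ (1 + δ) * m) :
    Robust qt δ ψ := by
  intro i Bs hB
  refine ⟨hB, fun j hj => ?_⟩
  have hmain := hB.pow_mul_le_card_Jzero hqtr j hj
  have hsum : ∑ t ∈ range (j + 1), (#{σ ∈ J (Bs t) | ψ σ = true} : ℝ) ≤ (1 + δ) * m :=
    le_trans (by exact_mod_cast hB.1.sum_card_ones_le ψ hj) hψ
  have := mul_le_mul_of_nonneg_left hsum (pow_nonneg (by linarith) j : (0 : ℝ) ≤ (qt * r) ^ j)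
  rw [pow_succ] at hmain
  linarith

end Tvert

section Exploration

open Tvert

variable {n r m g : ℕ} {y : Fin n → Fin r → Fin n} {A : Finset (Fin n)} {hA : A.card = m}

theorem zvert_of_len_eq_zero {σ : Tvert m g r} (h : len σ = 0) :
    zvert y A hA σ = A.orderIsoOfFin hA σ.1 := by
  simp [zvert, List.eq_nil_of_length_eq_zero (l := List.ofFn σ.2.2) (by simpa [len] using h)]

theorem zvert_eq_apply_parent (hr : 0 < r) {σ : Tvert m g r} (h : 0 < len σ) :
    zvert y A hA σ = y (zvert y A hA (parent σ)) (lastStep hr σ) := by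
  conv_lhs => rw [zvert, ofFn_eq_take_append_lastStep hr h]
  rw [List.foldl_append, zvert, parent, ofFn_trunc]
  rfl

theorem mem_Aseen {σ : Tvert m g r} {v : Fin n} :
    v ∈ Aseen y A hA σ ↔ ∃ σ', prec σ' σ ∧ zvert y A hA σ' = v := by
  simp [Aseen]

theorem psi_of_len_eq_zero {σ : Tvert m g r} (h : len σ = 0) : psi y A hA σ = false := by
  rw [psi]
  simp [h]

theorem psi_eq_true_iff {σ : Tvert m g r} (h : 0 < len σ) :
    psi y A hA σ = true ↔
      zvert y A hA σ ∈ Aseen y A hA σ ∧ ∀ l < len σ, psi y A hA (trunc σ l) = false := by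
  rw [psi, dif_neg h.ne']
  simp +contextual [List.any_eq_false]

theorem len_pos_of_psi {σ : Tvert m g r} (h : psi y A hA σ = true) : 0 < len σ :=
  Nat.pos_of_ne_zero fun h0 => by simp [psi_of_len_eq_zero h0] at h

theorem zvert_parent_notMem_Aseen {σ : Tvert m g r} (h : psi y A hA σ = true)
    (hp : 0 < len (parent σ)) : zvert y A hA (parent σ) ∉ Aseen y A hA (parent σ) := by
  intro hmem
  obtain ⟨-, hpre⟩ := (psi_eq_true_iff (len_pos_of_psi h)).mp h
  have hlen : len σ - 1 < len σ := Nat.sub_lt (len_pos_of_psi h) one_pos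
  obtain ⟨l, hl, hψl⟩ : ∃ l < len (parent σ), psi y A hA (trunc (parent σ) l) = true := by
    by_contra! hnone
    have := hpre _ hlen
    rw [← parent, (psi_eq_true_iff hp).mpr ⟨hmem, fun l hl => by simpa using hnone l hl⟩] at this
    exact absurd this (by simp)
  rw [len_parent] at hl
  rw [parent, trunc_trunc σ hl.le, hpre l (by omega)] at hψl
  exact Bool.false_ne_true hψl

theorem psi_congr {y' : Fin n → Fin r → Fin n} (σ : Tvert m g r)
    (hz : ∀ ρ, (prec ρ σ ∨ ρ = σ) → zvert y' A hA ρ = zvert y A hA ρ) :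
    psi y' A hA σ = psi y A hA σ := by
  induction hL : len σ using Nat.strong_induction_on generalizing σ with
  | _ L ih =>
  rcases Nat.eq_zero_or_pos L with h0 | h0
  · rw [psi_of_len_eq_zero (hL.trans h0), psi_of_len_eq_zero (hL.trans h0)]
  have hAseen : Aseen y' A hA σ = Aseen y A hA σ := by
    ext v
    simp only [mem_Aseen]
    exact exists_congr fun ρ => and_congr_right fun hρ => by rw [hz ρ (Or.inl hρ)]
  have hpre : ∀ l < len σ, psi y' A hA (trunc σ l) = psi y A hA (trunc σ l) := by
    intro l hl
    refine ih l (hL ▸ hl) _ (fun ρ hρ => hz ρ (Or.inl ?_)) (len_trunc_of_le hl.le)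
    rcases hρ with hρ | rfl
    · exact prec_trans hρ (trunc_prec hl)
    · exact trunc_prec hl
  rw [Bool.eq_iff_iff, psi_eq_true_iff (hL ▸ h0), psi_eq_true_iff (hL ▸ h0), hAseen,
    hz σ (Or.inr rfl)]
  exact and_congr_right fun _ => forall₂_congr fun l hl => by rw [hpre l hl]

variable (y A hA) in
/-- The arc `(v, i)` of the graph that is read when `z^σ` is computed from `z^{parent σ}`. -/
noncomputable def query (hr : 0 < r) (σ : Tvert m g r) : Fin n × Fin r :=
  (zvert y A hA (parent σ), lastStep hr σ)

theorem zvert_eq_apply_query (hr : 0 < r) {σ : Tvert m g r} (h : 0 < len σ) :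
    zvert y A hA σ = y (query y A hA hr σ).1 (query y A hA hr σ).2 :=
  zvert_eq_apply_parent hr h

/-- Before the first revisit of its branch, an exploration reads every arc at most once. -/
theorem query_ne (hr : 0 < r) {ρ σ : Tvert m g r} (hρσ : prec ρ σ) (hρ : 0 < len ρ)
    (hψ : psi y A hA σ = true) : query y A hA hr ρ ≠ query y A hA hr σ := by
  intro he
  have hz : zvert y A hA (parent ρ) = zvert y A hA (parent σ) := congrArg Prod.fst he
  have hσ := len_pos_of_psi hψ
  rcases parent_prec_or_eq hρσ hρ hσ with hp | hp
  · rcases Nat.eq_zero_or_pos (len (parent σ)) with h0 | h0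
    · have h0ρ : len (parent ρ) = 0 := Nat.eq_zero_of_le_zero (h0 ▸ len_le_of_prec hp)
      rw [zvert_of_len_eq_zero h0ρ, zvert_of_len_eq_zero h0] at hz
      have := eq_of_len_eq_zero h0ρ h0 ((A.orderIsoOfFin hA).injective (Subtype.ext hz))
      exact prec_irrefl _ (this ▸ hp)
    · exact zvert_parent_notMem_Aseen hψ h0 (mem_Aseen.mpr ⟨parent ρ, hp, hz⟩)
  · exact prec_irrefl σ (eq_of_parent_eq hr hρ hσ hp (congrArg Prod.snd he) ▸ hρσ)

theorem zvert_eq_of_forall_ne_query (hr : 0 < r) {y' : Fin n → Fin r → Fin n}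
    {σ : Tvert m g r} (hψ : psi y A hA σ = true)
    (hy' : ∀ v i, (v, i) ≠ query y A hA hr σ → y' v i = y v i) {ρ : Tvert m g r}
    (hρ : prec ρ σ) : zvert y' A hA ρ = zvert y A hA ρ := by
  induction hL : len ρ generalizing ρ with
  | zero => rw [zvert_of_len_eq_zero hL, zvert_of_len_eq_zero hL]
  | succ L ih =>
    have h0 : 0 < len ρ := hL ▸ L.succ_pos
    rw [zvert_eq_apply_parent hr h0, zvert_eq_apply_parent hr h0,
      ih (prec_trans (parent_prec h0) hρ) (by rw [len_parent, hL]; rfl)]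
    exact hy' _ _ (query_ne hr hρ h0 hψ)

end Exploration

section Counting

open Tvert

variable {n r m g : ℕ}

def setArc (y : Fin n → Fin r → Fin n) (v : Fin n) (i : Fin r) (w : Fin n) :
    Fin n → Fin r → Fin n :=
  Function.update y v (Function.update (y v) i w)

theorem setArc_apply (y : Fin n → Fin r → Fin n) (v : Fin n) (i : Fin r) (w v' : Fin n)
    (i' : Fin r) : setArc y v i w v' i' = if v' = v ∧ i' = i then w else y v' i' := by
  unfold setArc
  by_cases hv : v' = v
  · subst hv
    by_cases hi : i' = i <;> simp [hi]
  · simp [hv]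

theorem isGraph_setArc {y : Fin n → Fin r → Fin n} (hy : IsGraph y) {v w : Fin n} {i : Fin r}
    (hwv : w ≠ v) (hw : ∀ j ≠ i, y v j ≠ w) : IsGraph (setArc y v i w) := by
  intro x
  refine ⟨fun j j' hjj' => ?_, fun j => ?_⟩
  · simp only [setArc_apply] at hjj'
    by_cases hx : x = v
    · subst hx
      by_cases hj : j = i <;> by_cases hj' : j' = i <;> simp only [hj, hj', and_true,
        and_false, if_true, if_false] at hjj'
      · rw [hj, hj']
      · exact absurd hjj'.symm (hw j' hj')
      · exact absurd hjj' (hw j hj)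
      · exact (hy x).1 hjj'
    · simp only [hx, false_and, if_false] at hjj'
      exact (hy x).1 hjj'
  · rw [setArc_apply]
    split_ifs with h
    · exact h.1 ▸ hwv
    · exact (hy x).2 j

open scoped Classical in
noncomputable def graphs (n r : ℕ) : Finset (Fin n → Fin r → Fin n) := {y | IsGraph y}

open scoped Classical in
noncomputable def resample (y : Fin n → Fin r → Fin n) (e : Fin n × Fin r) :
    Finset (Fin n → Fin r → Fin n) :=
  {y' ∈ graphs n r | ∀ v i, (v, i) ≠ e → y' v i = y v i}

/-- The arc `e` of a graph can be redirected to any of the at least `n - r` vertices that are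
neither its tail nor the head of another arc out of that tail. -/
theorem sub_le_card_resample {y : Fin n → Fin r → Fin n} (hy : IsGraph y) (e : Fin n × Fin r) :
    n - r ≤ #(resample y e) := by
  classical
  set bad := insert e.1 ((univ.erase e.2).image (y e.1))
  have hbad : #bad ≤ r := by
    calc #bad ≤ #(univ.erase e.2) + 1 := (card_insert_le _ _).trans (by grw [card_image_le])
      _ = r := by rw [card_erase_of_mem (mem_univ _), card_univ, Fintype.card_fin,
                    Nat.sub_add_cancel e.2.pos]
  calc n - r ≤ #(univ \ bad) := by
        rw [card_sdiff_of_subset (subset_univ _), card_univ, Fintype.card_fin]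
        omega
    _ ≤ #(resample y e) := by
      refine card_le_card_of_injOn (setArc y e.1 e.2) (fun w hw => ?_) (fun w _ w' _ h => ?_)
      · simp only [coe_sdiff, coe_univ, Set.mem_sdiff, Set.mem_univ, mem_coe, true_and, bad,
          mem_insert, mem_image, mem_erase, not_or, not_exists, not_and] at hw
        simp only [resample, graphs, mem_coe, mem_filter, mem_univ, true_and]
        refine ⟨isGraph_setArc hy hw.1 fun j hj => hw.2 j ⟨hj, mem_univ _⟩, fun v i hvi => ?_⟩
        rw [setArc_apply, if_neg fun h => hvi (by rw [h.1, h.2])]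
      · simpa [setArc_apply] using congrFun (congrFun h e.1) e.2

variable {y : Fin n → Fin r → Fin n} {A : Finset (Fin n)} {hA : A.card = m}

theorem mem_resample {y' : Fin n → Fin r → Fin n} {e : Fin n × Fin r} :
    y' ∈ resample y e ↔ IsGraph y' ∧ ∀ v i, (v, i) ≠ e → y' v i = y v i := by
  simp [resample, graphs]

theorem psi_eq_of_mem_resample (hr : 0 < r) {σ a : Tvert m g r} (hψ : psi y A hA σ = true)
    {y' : Fin n → Fin r → Fin n} (hy' : y' ∈ resample y (query y A hA hr σ)) (ha : prec a σ) :
    psi y' A hA a = psi y A hA a := by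
  refine psi_congr a fun ρ hρ => zvert_eq_of_forall_ne_query hr hψ (mem_resample.mp hy').2 ?_
  rcases hρ with hρ | rfl
  exacts [prec_trans hρ ha, ha]

theorem query_eq_of_mem_resample (hr : 0 < r) {σ : Tvert m g r} (hψ : psi y A hA σ = true)
    {y' : Fin n → Fin r → Fin n} (hy' : y' ∈ resample y (query y A hA hr σ)) :
    query y' A hA hr σ = query y A hA hr σ := by
  rw [query, query, zvert_eq_of_forall_ne_query hr hψ (mem_resample.mp hy').2
    (parent_prec (len_pos_of_psi hψ))]

/-- The arc of `y` queried by `σ` points to some `z^ρ` with `ρ ≺ σ`, and `y'` agrees with `y`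
before `σ`. -/
theorem exists_eq_setArc_of_mem_resample (hr : 0 < r) {σ : Tvert m g r}
    (hψ : psi y A hA σ = true) {y' : Fin n → Fin r → Fin n}
    (hy' : y' ∈ resample y (query y A hA hr σ)) :
    ∃ ρ : Tvert m g r, y = setArc y' (query y' A hA hr σ).1 (query y' A hA hr σ).2
      (zvert y' A hA ρ) := by
  have hσ := len_pos_of_psi hψ
  obtain ⟨ρ, hρ, hz⟩ := mem_Aseen.mp ((psi_eq_true_iff hσ).mp hψ).1
  refine ⟨ρ, funext₂ fun v i => ?_⟩
  rw [setArc_apply, query_eq_of_mem_resample hr hψ hy',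
    zvert_eq_of_forall_ne_query hr hψ (mem_resample.mp hy').2 hρ, hz]
  split_ifs with h
  · rw [zvert_eq_apply_query hr hσ, ← h.1, ← h.2]
  · exact ((mem_resample.mp hy').2 v i fun h' => h (Prod.mk.inj h')).symm

open scoped Classical in
noncomputable def graphsWithOnes (A : Finset (Fin n)) (hA : A.card = m)
    (S : Finset (Tvert m g r)) : Finset (Fin n → Fin r → Fin n) :=
  {y ∈ graphs n r | ∀ σ ∈ S, psi y A hA σ = true}

theorem resample_subset_graphsWithOnes_erase (hr : 0 < r) {S : Finset (Tvert m g r)}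
    {σ : Tvert m g r} (hmax : ∀ a ∈ S, a ≠ σ → prec a σ) (hy : y ∈ graphsWithOnes A hA S)
    (hσ : σ ∈ S) : resample y (query y A hA hr σ) ⊆ graphsWithOnes A hA (S.erase σ) := by
  simp only [graphsWithOnes, mem_filter] at hy
  intro y' hy'
  simp only [graphsWithOnes, mem_filter, mem_erase]
  refine ⟨(mem_filter.mp hy').1, fun a ⟨hne, ha⟩ => ?_⟩
  rw [psi_eq_of_mem_resample hr (hy.2 σ hσ) hy' (hmax a ha hne)]
  exact hy.2 a ha

/-- Removing the `≺`-last vertex `σ` of `S` costs a factor `(n - r) / |T_m|`: each graph in the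
smaller set arises from at most `|T_m|` graphs in the larger one by resampling the arc queried
by `σ`, and each of those has at least `n - r` resamplings. -/
theorem card_graphsWithOnes_mul_le (hr : 0 < r) {S : Finset (Tvert m g r)} {σ : Tvert m g r}
    (hσ : σ ∈ S) (hmax : ∀ a ∈ S, a ≠ σ → prec a σ) :
    #(graphsWithOnes A hA S) * (n - r) ≤
      #(graphsWithOnes A hA (S.erase σ)) * Fintype.card (Tvert m g r) := by
  classical
  refine card_mul_le_card_mul (fun y y' => y' ∈ resample y (query y A hA hr σ))
    (fun y hy => ?_) (fun y' _ => ?_)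
  · have hsub := resample_subset_graphsWithOnes_erase hr hmax hy hσ
    refine (sub_le_card_resample (mem_filter.mp (mem_filter.mp hy).1).2
      (query y A hA hr σ)).trans (card_le_card fun y' hy' => ?_)
    simpa [bipartiteAbove] using ⟨hsub hy', hy'⟩
  · calc #(bipartiteBelow _ _ y') ≤ #((univ : Finset (Tvert m g r)).image fun ρ =>
          setArc y' (query y' A hA hr σ).1 (query y' A hA hr σ).2 (zvert y' A hA ρ)) := by
          refine card_le_card fun y hy => ?_
          simp only [bipartiteBelow, mem_filter] at hy
          obtain ⟨ρ, hρ⟩ := exists_eq_setArc_of_mem_resample hr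
            ((mem_filter.mp hy.1).2 σ hσ) hy.2
          exact mem_image.mpr ⟨ρ, mem_univ _, hρ.symm⟩
      _ ≤ Fintype.card (Tvert m g r) := card_image_le

theorem card_graphsWithOnes_mul_pow_le (hr : 0 < r) (S : Finset (Tvert m g r)) :
    #(graphsWithOnes A hA S) * (n - r) ^ #S ≤ Fintype.card (Tvert m g r) ^ #S * #(graphs n r) := by
  induction S using Finset.strongInduction with
  | _ S ih =>
  rcases S.eq_empty_or_nonempty with rfl | hS
  · simpa using card_le_card (s := graphsWithOnes A hA ∅) (filter_subset _ _)
  obtain ⟨σ, hσ, hmax⟩ := exists_greatest_prec S hS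
  have hcard : #S = #(S.erase σ) + 1 := (card_erase_add_one hσ).symm
  calc #(graphsWithOnes A hA S) * (n - r) ^ #S
      = #(graphsWithOnes A hA S) * (n - r) * (n - r) ^ #(S.erase σ) := by
        rw [hcard, pow_succ]; ring
    _ ≤ #(graphsWithOnes A hA (S.erase σ)) * Fintype.card (Tvert m g r) *
          (n - r) ^ #(S.erase σ) := by grw [card_graphsWithOnes_mul_le hr hσ hmax]
    _ = Fintype.card (Tvert m g r) *
          (#(graphsWithOnes A hA (S.erase σ)) * (n - r) ^ #(S.erase σ)) := by ring
    _ ≤ Fintype.card (Tvert m g r) * (Fintype.card (Tvert m g r) ^ #(S.erase σ) *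
          #(graphs n r)) := by grw [ih _ (erase_ssubset hσ)]
    _ = Fintype.card (Tvert m g r) ^ #S * #(graphs n r) := by rw [hcard, pow_succ]; ring

open scoped Classical in
theorem card_ones_ge_mul_pow_le (hr : 0 < r) (A : Finset (Fin n)) (hA : A.card = m) (k : ℕ) :
    #{y ∈ graphs n r | k ≤ #{σ : Tvert m g r | psi y A hA σ = true}} * (n - r) ^ k ≤
      (Fintype.card (Tvert m g r)).choose k * Fintype.card (Tvert m g r) ^ k * #(graphs n r) := by
  classical
  have hcover : {y ∈ graphs n r | k ≤ #{σ : Tvert m g r | psi y A hA σ = true}} ⊆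
      (powersetCard k (univ : Finset (Tvert m g r))).biUnion (graphsWithOnes A hA) := by
    intro y hy
    obtain ⟨hyG, hk⟩ := mem_filter.mp hy
    obtain ⟨S, hS, hSk⟩ := exists_subset_card_eq hk
    refine mem_biUnion.mpr ⟨S, mem_powersetCard.mpr ⟨subset_univ S, hSk⟩, mem_filter.mpr
      ⟨hyG, fun σ hσ => (mem_filter.mp (hS hσ)).2⟩⟩
  calc _ ≤ (∑ S ∈ powersetCard k univ, #(graphsWithOnes A hA S)) * (n - r) ^ k := by
        grw [card_le_card hcover, card_biUnion_le]
    _ = ∑ S ∈ powersetCard k (univ : Finset (Tvert m g r)),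
          #(graphsWithOnes A hA S) * (n - r) ^ #S := by
        rw [sum_mul]
        exact sum_congr rfl fun S hS => by rw [(mem_powersetCard.mp hS).2]
    _ ≤ ∑ S ∈ powersetCard k (univ : Finset (Tvert m g r)),
          Fintype.card (Tvert m g r) ^ k * #(graphs n r) := by
        refine sum_le_sum fun S hS => ?_
        rw [← (mem_powersetCard.mp hS).2]
        exact card_graphsWithOnes_mul_pow_le hr S
    _ = _ := by rw [sum_const, card_powersetCard, card_univ, smul_eq_mul, mul_assoc]

open scoped Classical in
theorem card_exists_not_robust_mul_pow_le (hr : 0 < r) {qt δ : ℝ} (hqtr : 1 ≤ qt * r)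
    {k : ℕ} (hk : (k : ℝ) ≤ (1 + δ) * m + 1) :
    #{y ∈ graphs n r | ∃ A : Finset (Fin n), A.card = m ∧
        ¬ Robust (g := g) qt δ (psi y A rfl)} * (n - r) ^ k ≤
      n.choose m * ((Fintype.card (Tvert m g r)).choose k * Fintype.card (Tvert m g r) ^ k *
        #(graphs n r)) := by
  have hcover : {y ∈ graphs n r | ∃ A : Finset (Fin n), A.card = m ∧
      ¬ Robust (g := g) qt δ (psi y A rfl)} ⊆ (powersetCard m univ).biUnion fun A =>
        {y ∈ graphs n r | k ≤ #{σ : Tvert A.card g r | psi y A rfl σ = true}} := by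
    intro y hy
    obtain ⟨hyG, A, rfl, hA⟩ := mem_filter.mp hy
    refine mem_biUnion.mpr ⟨A, mem_powersetCard_univ.mpr rfl, mem_filter.mpr ⟨hyG, ?_⟩⟩
    have hones := lt_of_not_ge (mt (robust_of_card_le hqtr) hA)
    have : (k : ℝ) < #{σ : Tvert A.card g r | psi y A rfl σ = true} + 1 := by linarith
    exact Nat.lt_succ_iff.mp (by exact_mod_cast this)
  calc _ ≤ (∑ A ∈ powersetCard m univ,
          #{y ∈ graphs n r | k ≤ #{σ : Tvert A.card g r | psi y A rfl σ = true}}) *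
            (n - r) ^ k := by
        grw [card_le_card hcover, card_biUnion_le]
    _ ≤ ∑ A ∈ powersetCard m (univ : Finset (Fin n)), (Fintype.card (Tvert m g r)).choose k *
          Fintype.card (Tvert m g r) ^ k * #(graphs n r) := by
        rw [sum_mul]
        refine sum_le_sum fun A hA => ?_
        obtain rfl := mem_powersetCard_univ.mp hA
        exact card_ones_ge_mul_pow_le hr A rfl k
    _ = _ := by rw [sum_const, card_powersetCard, card_univ, Fintype.card_fin, smul_eq_mul]

theorem card_tvert_le (hr : 0 < r) : Fintype.card (Tvert m g r) ≤ (g + 1) * r ^ g * m := by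
  rw [Fintype.card_prod, Fintype.card_fin, Fintype.card_sigma, mul_comm]
  gcongr
  calc ∑ i : Fin (g + 1), Fintype.card (Fin i → Fin r) ≤ ∑ _i : Fin (g + 1), r ^ g := by
        gcongr with i
        simpa using Nat.pow_le_pow_right hr (Nat.lt_succ_iff.mp i.2)
    _ = (g + 1) * r ^ g := by simp

open scoped Classical in
theorem card_exists_not_robust_le (hr : 0 < r) (hn : r < n) {qt δ : ℝ} (hqtr : 1 ≤ qt * r)
    {k : ℕ} (hk : (k : ℝ) ≤ (1 + δ) * m + 1) :
    (#{y ∈ graphs n r | ∃ A : Finset (Fin n), A.card = m ∧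
        ¬ Robust (g := g) qt δ (psi y A rfl)} : ℝ) ≤
      n.choose m * 2 ^ ((g + 1) * r ^ g * m) *
        ((((g + 1) * r ^ g : ℕ) : ℝ) * m / (n - r : ℕ)) ^ k * #(graphs n r) := by
  set K := (g + 1) * r ^ g
  set Tc := Fintype.card (Tvert m g r)
  have hTc : Tc ≤ K * m := card_tvert_le hr
  have hnr : (0 : ℝ) < (n - r : ℕ) := Nat.cast_pos.mpr (Nat.sub_pos_of_lt hn)
  have hcount := (card_exists_not_robust_mul_pow_le (g := g) hr hqtr hk).trans
    (Nat.mul_le_mul_left (n.choose m) (Nat.mul_le_mul_right #(graphs n r)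
      (Nat.mul_le_mul ((Nat.choose_le_two_pow Tc k).trans (Nat.pow_le_pow_right two_pos hTc))
        (Nat.pow_le_pow_left hTc k))))
  rw [div_pow, ← mul_div_assoc, div_mul_eq_mul_div, le_div_iff₀ (pow_pos hnr k)]
  exact_mod_cast hcount.trans_eq (by ring)

end Counting

section Estimates

open Real

theorem Nat.choose_le_exp_mul_div_pow (n : ℕ) {m : ℕ} (hm : 0 < m) :
    (n.choose m : ℝ) ≤ (exp 1 * n / m) ^ m := by
  have hm' : (0 : ℝ) < m := Nat.cast_pos.mpr hm
  calc (n.choose m : ℝ) ≤ n ^ m / m.factorial := Nat.choose_le_pow_div m n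
    _ = (n / m) ^ m * ((m : ℝ) ^ m / m.factorial) := by rw [div_pow]; field_simp
    _ ≤ (n / m) ^ m * exp m := by gcongr; exact pow_div_factorial_le_exp _ hm'.le m
    _ = (exp 1 * n / m) ^ m := by rw [← exp_one_pow, mul_div_assoc, mul_pow, mul_comm]

/-- `ε` is chosen so that `(2Kε)^δ = (2K · 2^K · e · e)⁻¹`: the excess `δm` of the `k` collisions
pays for the entropy `(2K · 2^K · e)^m` of choosing `A` and the `ψ = 1` vertices, and leaves
`e^{-m}`. -/
theorem exists_choose_mul_pow_le_exp_neg {K : ℕ} (hK : 0 < K) {δ : ℝ} (hδ : 0 < δ) :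
    ∃ ε > 0, ∀ (n m k : ℕ) (x : ℝ), 0 < m → (m : ℝ) ≤ ε * n → (n : ℝ) ≤ 2 * x →
      (1 + δ) * m < k → (n.choose m : ℝ) * 2 ^ (K * m) * ((K * m : ℝ) / x) ^ k ≤ exp (-m) := by
  set c : ℝ := 2 * K * 2 ^ K * exp 1 * exp 1
  have hK' : (1 : ℝ) ≤ K := Nat.one_le_cast.mpr hK
  have he : 1 ≤ exp 1 := one_le_exp zero_le_one
  have hc : 1 ≤ c := one_le_mul_of_one_le_of_one_le (one_le_mul_of_one_le_of_one_le
    (one_le_mul_of_one_le_of_one_le (by linarith) (one_le_pow₀ one_le_two)) he) he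
  set ε : ℝ := c⁻¹ ^ δ⁻¹ / (2 * K)
  have hcδ : 0 < c⁻¹ ^ δ⁻¹ := rpow_pos_of_pos (by positivity) _
  refine ⟨ε, by positivity, fun n m k x hm hmn hnx hk => ?_⟩
  have hm' : (0 : ℝ) < m := Nat.cast_pos.mpr hm
  have hn : (0 : ℝ) < n := by
    by_contra! h
    nlinarith [mul_nonpos_of_nonneg_of_nonpos (by positivity : 0 ≤ ε) h]
  set X : ℝ := 2 * K * m / n
  have hX0 : 0 < X := by positivity
  have hXε : X ≤ c⁻¹ ^ δ⁻¹ := by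
    rw [div_le_iff₀ hn]
    calc 2 * K * (m : ℝ) ≤ 2 * K * (ε * n) := by gcongr
      _ = c⁻¹ ^ δ⁻¹ * n := by simp only [ε]; field_simp
  have hX1 : X ≤ 1 := hXε.trans (rpow_le_one (by positivity) (inv_le_one_of_one_le₀ hc)
    (by positivity))
  have hXδ : X ^ δ ≤ c⁻¹ := by
    calc X ^ δ ≤ (c⁻¹ ^ δ⁻¹) ^ δ := rpow_le_rpow hX0.le hXε hδ.le
      _ = c⁻¹ := rpow_inv_rpow (by positivity) hδ.ne'
  have hratio : (K * m : ℝ) / x ≤ X := by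
    simp only [X]
    rw [div_le_div_iff₀ (by linarith) hn]
    nlinarith [mul_le_mul_of_nonneg_left hnx (by positivity : (0 : ℝ) ≤ K * m)]
  have hpow : X ^ k ≤ X ^ m * (X ^ δ) ^ m := by
    rw [← rpow_natCast, ← rpow_natCast, ← rpow_natCast, ← rpow_mul hX0.le, ← rpow_add hX0]
    exact rpow_le_rpow_of_exponent_ge hX0 hX1 (by linarith)
  calc (n.choose m : ℝ) * 2 ^ (K * m) * ((K * m : ℝ) / x) ^ k
      ≤ (exp 1 * n / m) ^ m * 2 ^ (K * m) * (X ^ m * (X ^ δ) ^ m) := by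
        have hx : 0 ≤ (K * m : ℝ) / x := div_nonneg (by positivity) (by linarith)
        gcongr ?_ * _ * ?_
        · exact Nat.choose_le_exp_mul_div_pow n hm
        · exact (pow_le_pow_left₀ hx hratio k).trans hpow
    _ = (exp 1 * (n / m * X) * 2 ^ K * X ^ δ) ^ m := by rw [pow_mul]; ring
    _ = (2 * K * 2 ^ K * exp 1 * X ^ δ) ^ m := by
        rw [show (n / m * X : ℝ) = 2 * K by simp only [X]; field_simp]
        ring
    _ ≤ (2 * K * 2 ^ K * exp 1 * c⁻¹) ^ m := by gcongr
    _ = exp (-m) := by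
        rw [exp_neg, ← exp_one_pow, ← inv_pow]
        congr 1
        simp only [c]
        field_simp

end Estimates

theorem graphMeasure_setOf {n r : ℕ} (P : (Fin n → Fin r → Fin n) → Prop) [DecidablePred P] :
    graphMeasure n r {w | P w.1} = #{y ∈ graphs n r | P y} / #(graphs n r) := by
  classical
  rw [graphMeasure, Measure.smul_apply, smul_eq_mul, ENNReal.div_eq_inv_mul,
    Measure.count_apply_finite _ (Set.toFinite _), Nat.card_eq_fintype_card,
    Fintype.card_subtype]
  congr 2
  refine Finset.card_bij (fun w _ => w.1) (fun w hw => ?_) (fun _ _ _ _ => Subtype.ext)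
    (fun y hy => ?_)
  · simpa [graphs, w.2] using hw
  · simp only [graphs, Finset.mem_filter, Finset.mem_univ, true_and] at hy
    exact ⟨⟨y, hy.1⟩, by simpa using hy.2, rfl⟩

theorem nonrobust_probability_bound_general
    (r : ℕ) (hr : 1 ≤ r) (qt : ℝ) (hqtr : 1 < qt * r)
    (δ : ℝ) (hδ0 : 0 < δ)
    (g : ℕ) :
    ∃ ε > (0 : ℝ), ∃ d > (0 : ℝ), ∃ D > (0 : ℝ),
      ∀ n : ℕ, r < n →
        ∀ m : ℕ, 1 ≤ m → (m : ℝ) ≤ ε * n →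
          graphMeasure n r
              {w | ∃ A : Finset (Fin n), A.card = m ∧
                ¬ Tvert.Robust (g := g) qt δ (psi w.1 A rfl)} ≤
            ENNReal.ofReal (D * Real.exp (-d * m)) := by
  classical
  obtain ⟨ε, hε, hbound⟩ :=
    exists_choose_mul_pow_le_exp_neg (K := (g + 1) * r ^ g) (by positivity) hδ0
  refine ⟨min ε (2 * r)⁻¹, by positivity, 1, one_pos, 1, one_pos, fun n hn m hm hmn => ?_⟩
  have hr' : (0 : ℝ) < r := Nat.cast_pos.mpr hr
  have h2r : 2 * (r : ℝ) ≤ n := by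
    have := hmn.trans (mul_le_mul_of_nonneg_right (min_le_right _ _) (Nat.cast_nonneg n))
    rw [← div_eq_inv_mul, le_div_iff₀ (by positivity)] at this
    nlinarith [(Nat.one_le_cast (α := ℝ)).mpr hm]
  obtain ⟨k, hk_gt, hk_le⟩ : ∃ k : ℕ, (1 + δ) * m < k ∧ (k : ℝ) ≤ (1 + δ) * m + 1 :=
    ⟨⌊(1 + δ) * m⌋₊ + 1, by push_cast; exact Nat.lt_floor_add_one _,
      by push_cast; linarith [Nat.floor_le (by positivity : 0 ≤ (1 + δ) * m)]⟩
  have hcard := card_exists_not_robust_le (g := g) hr hn hqtr.le hk_le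
  have hexp := hbound n m k (n - r : ℕ) hm
    (hmn.trans (mul_le_mul_of_nonneg_right (min_le_left _ _) (Nat.cast_nonneg n)))
    (by rw [Nat.cast_sub hn.le]; linarith) hk_gt
  rw [graphMeasure_setOf fun y => ∃ A : Finset (Fin n), A.card = m ∧
    ¬ Tvert.Robust (g := g) qt δ (psi y A rfl), one_mul, neg_one_mul]
  refine ENNReal.div_le_of_le_mul ?_
  rw [← ENNReal.ofReal_natCast, ← ENNReal.ofReal_natCast #(graphs n r),
    ← ENNReal.ofReal_mul (Real.exp_pos _).le]
  exact ENNReal.ofReal_le_ofReal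
    (hcard.trans (mul_le_mul_of_nonneg_right hexp (Nat.cast_nonneg _)))

/-- **Lemma 2.4.** There are `ε, d, D > 0` such that for every `n > r` and every `m ≥ 1` with
`m ≤ εn`, `P_n(∃ A ⊆ V_n with |A| = m such that ψ(A) is not robust) ≤ D e^{-dm}`. -/
theorem nonrobust_probability_bound
    (r : ℕ) (hr : 1 ≤ r) (q : ℝ) (hq0 : 0 ≤ q) (hq1 : q ≤ 1) (hqr : 1 < q * r)
    (qt : ℝ) (hqt0 : 0 < qt) (hqtq : qt < q) (hqtr : 1 < qt * r)
    (δ : ℝ) (hδ0 : 0 < δ) (hδ1 : δ < min (qt * r - 1) 1)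
    (g : ℕ) (hg : 1 ≤ g)
    (hgrow : 1 + δ < (qt * r - 1 - δ) * (qt * r) ^ (g - 1)) :
    ∃ ε > (0 : ℝ), ∃ d > (0 : ℝ), ∃ D > (0 : ℝ),
      ∀ n : ℕ, r < n →
        ∀ m : ℕ, 1 ≤ m → (m : ℝ) ≤ ε * n →
          graphMeasure n r
              {w | ∃ A : Finset (Fin n), A.card = m ∧
                ¬ Tvert.Robust (g := g) qt δ (psi w.1 A rfl)} ≤
            ENNReal.ofReal (D * Real.exp (-d * m)) :=
  nonrobust_probability_bound_general r hr qt hqtr δ hδ0 g
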